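/- Let M be an odd positive integer and let u_1, …, u_M be real numbers with S = ∑_{m=1}^{M} u_m ≠ 0. For each b ≥ max_m |u_m| with b > 0, let û_1(b), …, û_M(b) be independent random variables with P(û_m(b) = 1) = (b + u_m)/(2b) and P(û_m(b) = −1) = (b − u_m)/(2b). Then there exist constants C > 0 and b_0 ≥ max_m |u_m| such that for all b ≥ b_0: | P( sign(∑_{m=1}^{M} û_m(b)) ≠ sign(S) ) − ( 1/2 − (C(M−1, (M−1)/2) / (2^M · b)) · |S| ) | ≤ C/b², where C(n,k) denotes the binomial coefficient. -/

import Mathlib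

/-!
Almost surely every `û_m(b)` is `±1`, so by independence the probability of a wrong vote is a sum,
over the sign patterns whose majority is wrong, of products `∏ (1/2 ± x_m)` with
`x_m = u_m / (2b)`. Replacing `x` by `sign S • x` turns this into the probability that at most `k`
of the `2k+1` signs are `+1`. Expanding each product to first order in `x`, the constant terms add
up to `1/2` (half of all patterns have at most `k` plus signs), the linear terms to
`-C(2k,k) 4⁻ᵏ ∑ x_m` (each index is `+1` in `C(2k,k)` fewer of these patterns than it is `-1`), and
the remaining terms are `O(b⁻²)`.
-/

open Finset MeasureTheory ProbabilityTheory

section Combinatorics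

variable {ι : Type*}

theorem card_filter_card_le [Fintype ι] {k : ℕ} (hι : Fintype.card ι = 2 * k + 1) :
    #{A : Finset ι | #A ≤ k} = 4 ^ k := by
  rw [card_eq_sum_card_fiberwise (f := card) (t := range (k + 1))
    fun A hA => mem_range.2 (Nat.lt_succ_of_le (mem_filter.1 hA).2)]
  rw [← Nat.sum_range_choose_halfway, ← hι]
  refine sum_congr rfl fun j hj => ?_
  rw [← card_univ, ← card_powersetCard, powersetCard_eq_filter, powerset_univ, filter_filter]
  congr 1
  exact filter_congr fun A _ => by have := mem_range.1 hj; constructor <;> rintro ⟨_, _⟩ <;> omega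

variable [DecidableEq ι]

def pmIndicator (A : Finset ι) (i : ι) : ℝ := if i ∈ A then 1 else -1

theorem abs_pmIndicator (A : Finset ι) (i : ι) : |pmIndicator A i| = 1 := by
  unfold pmIndicator; split_ifs <;> simp

theorem pmIndicator_injective : Function.Injective (pmIndicator (ι := ι)) := by
  intro A B h
  ext i
  have hi := congrFun h i
  by_cases hA : i ∈ A <;> by_cases hB : i ∈ B <;>
    simp [pmIndicator, hA, hB] at hi ⊢ <;> norm_num at hi

theorem abs_prod_half_add_sub_le {s : Finset ι} (hs : s.Nonempty)
    {y : ι → ℝ} {ε : ℝ} (hy : ∀ i ∈ s, |y i| ≤ ε) (hε : ε ≤ 1) :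
    |∏ i ∈ s, (1 / 2 + y i) - (1 / 2) ^ #s - (1 / 2) ^ (#s - 1) * ∑ i ∈ s, y i|
      ≤ 2 ^ #s * ε ^ 2 := by
  obtain ⟨i₀, hi₀⟩ := hs
  have hε₀ : 0 ≤ ε := (abs_nonneg _).trans (hy i₀ hi₀)
  set g : ℕ → ℝ := fun j => ∑ t ∈ powersetCard j s, (∏ i ∈ t, y i) * (1 / 2) ^ (#s - j)
  have hexpand : ∏ i ∈ s, (1 / 2 + y i) = ∑ j ∈ range (#s + 1), g j := by
    simp_rw [add_comm (1 / 2 : ℝ)]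
    rw [prod_add, sum_powerset]
    refine sum_congr rfl fun j _ => sum_congr rfl fun t ht => ?_
    rw [mem_powersetCard] at ht
    rw [prod_const, card_sdiff_of_subset ht.1, ht.2]
  have hg₀ : g 0 = (1 / 2) ^ #s := by simp [g]
  have hg₁ : g 1 = (1 / 2) ^ (#s - 1) * ∑ i ∈ s, y i := by
    simp [g, powersetCard_one, sum_mul, mul_comm]
  have hg : ∀ j, 2 ≤ j → |g j| ≤ (#s).choose j * ε ^ 2 := by
    intro j hj
    calc |g j| ≤ ∑ t ∈ powersetCard j s, |(∏ i ∈ t, y i) * (1 / 2) ^ (#s - j)| :=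
          abs_sum_le_sum_abs _ _
      _ ≤ ∑ t ∈ powersetCard j s, ε ^ 2 := by
          refine sum_le_sum fun t ht => ?_
          rw [mem_powersetCard] at ht
          rw [abs_mul, abs_prod, abs_of_nonneg (by positivity : (0 : ℝ) ≤ (1 / 2) ^ (#s - j))]
          calc (∏ i ∈ t, |y i|) * (1 / 2) ^ (#s - j) ≤ (∏ _i ∈ t, ε) * 1 := by
                gcongr with i hi
                · exact hy i (ht.1 hi)
                · exact pow_le_one₀ (by norm_num) (by norm_num)
            _ ≤ ε ^ 2 := by
                rw [prod_const, ht.2, mul_one]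
                exact pow_le_pow_of_le_one hε₀ hε hj
      _ = (#s).choose j * ε ^ 2 := by rw [sum_const, card_powersetCard, nsmul_eq_mul]
  have htail : |∑ j ∈ Ico 2 (#s + 1), g j| ≤ 2 ^ #s * ε ^ 2 := by
    calc |∑ j ∈ Ico 2 (#s + 1), g j| ≤ ∑ j ∈ Ico 2 (#s + 1), |g j| := abs_sum_le_sum_abs _ _
      _ ≤ ∑ j ∈ Ico 2 (#s + 1), ((#s).choose j : ℝ) * ε ^ 2 :=
          sum_le_sum fun j hj => hg j (mem_Ico.1 hj).1
      _ ≤ ∑ j ∈ range (#s + 1), ((#s).choose j : ℝ) * ε ^ 2 :=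
          sum_le_sum_of_subset_of_nonneg (fun j hj => mem_range.2 (mem_Ico.1 hj).2)
            fun _ _ _ => by positivity
      _ = 2 ^ #s * ε ^ 2 := by
          rw [← sum_mul, ← Nat.cast_sum, Nat.sum_range_choose]
          push_cast
          ring
  have hcard : 2 ≤ #s + 1 := by have := card_pos.2 ⟨i₀, hi₀⟩; omega
  rw [hexpand, ← sum_range_add_sum_Ico g hcard, sum_range_succ, sum_range_one, hg₀, hg₁]
  convert htail using 2
  ring

variable [Fintype ι] {k : ℕ}

theorem pmIndicator_compl (A : Finset ι) (i : ι) :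
    pmIndicator Aᶜ i = -pmIndicator A i := by
  by_cases h : i ∈ A <;> simp [pmIndicator, h]

theorem sum_pmIndicator (A : Finset ι) :
    ∑ i, pmIndicator A i = 2 * #A - Fintype.card ι := by
  calc ∑ i, pmIndicator A i = ∑ i, (2 * (if i ∈ A then 1 else 0) - 1 : ℝ) :=
        sum_congr rfl fun i _ => by unfold pmIndicator; split_ifs <;> norm_num
    _ = 2 * #A - Fintype.card ι := by
        rw [sum_sub_distrib, ← mul_sum, sum_boole, filter_mem_eq_inter, univ_inter]
        simp

theorem sign_sum_pmIndicator (hι : Fintype.card ι = 2 * k + 1) (A : Finset ι) :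
    Real.sign (∑ i, pmIndicator A i) = if #A ≤ k then -1 else 1 := by
  rw [sum_pmIndicator, hι]
  split_ifs with h
  · exact Real.sign_of_neg (by push_cast; linarith [(Nat.cast_le (α := ℝ)).2 h])
  · have : (k : ℝ) + 1 ≤ #A := by exact_mod_cast not_le.1 h
    exact Real.sign_of_pos (by push_cast; linarith)

theorem sum_pmIndicator_filter_card_le (hι : Fintype.card ι = 2 * k + 1) (m : ι) :
    ∑ A ∈ {A : Finset ι | #A ≤ k}, pmIndicator A m = -(2 * k).choose k := by
  set s := univ.erase m
  have hs : #s = 2 * k := by simp [s, hι]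
  calc ∑ A ∈ {A : Finset ι | #A ≤ k}, pmIndicator A m
      = ∑ A ∈ (insert m s).powerset, if #A ≤ k then pmIndicator A m else 0 := by
        rw [sum_filter, insert_erase (mem_univ m), powerset_univ]
    _ = ∑ t ∈ s.powerset, ((if #t ≤ k then -1 else 0) + if #t + 1 ≤ k then 1 else 0) := by
        rw [sum_powerset_insert (notMem_erase m univ), ← sum_add_distrib]
        refine sum_congr rfl fun t ht => ?_
        have hm : m ∉ t := fun h => notMem_erase m univ (mem_powerset.1 ht h)
        simp [pmIndicator, hm, card_insert_of_notMem hm]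
    _ = ∑ t ∈ s.powerset, if #t = k then -1 else 0 :=
        sum_congr rfl fun t _ => by split_ifs <;> first | omega | norm_num
    _ = -(2 * k).choose k := by
        rw [← sum_filter, ← powersetCard_eq_filter, sum_const, card_powersetCard, hs]
        simp

/-- The probability that at most `k` of independent `±1`-valued variables with
`P(X i = 1) = 1/2 + x i` are equal to `1`. -/
noncomputable def minorityProb (k : ℕ) (x : ι → ℝ) : ℝ :=
  ∑ A ∈ {A : Finset ι | #A ≤ k}, ∏ i, (1 / 2 + pmIndicator A i * x i)

theorem abs_minorityProb_sub_le (hι : Fintype.card ι = 2 * k + 1) {x : ι → ℝ} {ε : ℝ}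
    (hx : ∀ i, |x i| ≤ ε) (hε : ε ≤ 1) :
    |minorityProb k x - (1 / 2 - (2 * k).choose k * (1 / 2) ^ (2 * k) * ∑ i, x i)|
      ≤ 2 * 16 ^ k * ε ^ 2 := by
  have : Nonempty ι := Fintype.card_pos_iff.1 (by omega)
  have hterm : ∀ A : Finset ι, |∏ i, (1 / 2 + pmIndicator A i * x i) - (1 / 2) ^ (2 * k + 1)
      - (1 / 2) ^ (2 * k) * ∑ i, pmIndicator A i * x i| ≤ 2 ^ (2 * k + 1) * ε ^ 2 := fun A => by
    simpa [hι] using abs_prod_half_add_sub_le univ_nonempty (y := fun i => pmIndicator A i * x i)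
      (fun i _ => by rw [abs_mul, abs_pmIndicator, one_mul]; exact hx i) hε
  have hlinear : 1 / 2 - (2 * k).choose k * (1 / 2) ^ (2 * k) * ∑ i, x i
      = ∑ A ∈ {A : Finset ι | #A ≤ k},
          ((1 / 2) ^ (2 * k + 1) + (1 / 2) ^ (2 * k) * ∑ i, pmIndicator A i * x i) := by
    rw [sum_add_distrib, sum_const, card_filter_card_le hι, ← mul_sum, sum_comm]
    simp_rw [← sum_mul, sum_pmIndicator_filter_card_le hι]
    rw [nsmul_eq_mul, ← mul_sum]
    rw [Nat.cast_pow, Nat.cast_ofNat, show (4 : ℝ) ^ k * (1 / 2) ^ (2 * k + 1) = 1 / 2 by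
      rw [pow_succ, pow_mul, ← mul_assoc, ← mul_pow]; norm_num]
    ring
  calc |minorityProb k x - (1 / 2 - (2 * k).choose k * (1 / 2) ^ (2 * k) * ∑ i, x i)|
      = |∑ A ∈ {A : Finset ι | #A ≤ k}, (∏ i, (1 / 2 + pmIndicator A i * x i)
          - (1 / 2) ^ (2 * k + 1) - (1 / 2) ^ (2 * k) * ∑ i, pmIndicator A i * x i)| := by
        rw [hlinear, minorityProb, ← sum_sub_distrib]
        simp_rw [sub_sub]
    _ ≤ ∑ A ∈ {A : Finset ι | #A ≤ k}, 2 ^ (2 * k + 1) * ε ^ 2 :=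
        (abs_sum_le_sum_abs _ _).trans (sum_le_sum fun A _ => hterm A)
    _ = 2 * 16 ^ k * ε ^ 2 := by
        rw [sum_const, card_filter_card_le hι, nsmul_eq_mul, pow_succ, pow_mul,
          show (16 : ℝ) = 4 * 4 by norm_num, mul_pow]
        push_cast
        ring

theorem sum_filter_not_card_le_eq_minorityProb_neg (hι : Fintype.card ι = 2 * k + 1)
    (x : ι → ℝ) :
    ∑ A ∈ {A : Finset ι | ¬#A ≤ k}, ∏ i, (1 / 2 + pmIndicator A i * x i)
      = minorityProb k (-x) := by
  refine sum_nbij' compl compl (fun A hA => ?_) (fun A hA => ?_) (fun A _ => compl_compl A)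
    (fun A _ => compl_compl A) fun A _ => ?_
  · simp only [mem_filter, mem_univ, true_and, card_compl, hι] at hA ⊢
    omega
  · have := card_le_univ A
    simp only [mem_filter, mem_univ, true_and, card_compl, hι] at hA ⊢
    omega
  · simp [pmIndicator_compl]

end Combinatorics

theorem Real.sign_mul_self_eq_abs (s : ℝ) : Real.sign s * s = |s| := by
  rcases lt_trichotomy s 0 with h | rfl | h
  · rw [Real.sign_of_neg h, abs_of_neg h, neg_one_mul]
  · simp
  · rw [Real.sign_of_pos h, abs_of_pos h, one_mul]

theorem Real.abs_sign_of_ne_zero {s : ℝ} (hs : s ≠ 0) : |Real.sign s| = 1 := by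
  rcases Real.sign_apply_eq_of_ne_zero s hs with h | h <;> simp [h]

section Probability

variable {Ω ι : Type*} [MeasurableSpace Ω] {P : Measure Ω}

theorem ae_eq_one_or_eq_neg_one [IsProbabilityMeasure P] {X : Ω → ℝ} (hX : Measurable X)
    (h : (P {ω | X ω = 1}).toReal + (P {ω | X ω = -1}).toReal = 1) :
    ∀ᵐ ω ∂P, X ω = 1 ∨ X ω = -1 := by
  have hm₁ : MeasurableSet {ω | X ω = 1} := hX (measurableSet_singleton 1)
  have hm₂ : MeasurableSet {ω | X ω = -1} := hX (measurableSet_singleton (-1))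
  have hdisj : Disjoint {ω | X ω = 1} {ω | X ω = -1} :=
    Set.disjoint_left.2 fun ω (h₁ : X ω = 1) (h₂ : X ω = -1) => by linarith
  have hunion : P ({ω | X ω = 1} ∪ {ω | X ω = -1}) = 1 := by
    rw [measure_union hdisj hm₂, ← ENNReal.toReal_eq_one_iff,
      ENNReal.toReal_add (measure_ne_top _ _) (measure_ne_top _ _), h]
  exact ae_iff.2 ((prob_compl_eq_zero_iff (hm₁.union hm₂)).2 hunion)

variable [Fintype ι] [DecidableEq ι] {X : ι → Ω → ℝ}

theorem measure_setOf_eq_sum_prod (hX : ∀ i, Measurable (X i)) (hind : iIndepFun X P)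
    (hpm : ∀ i, ∀ᵐ ω ∂P, X i ω = 1 ∨ X i ω = -1) (p : (ι → ℝ) → Prop) [DecidablePred p] :
    P {ω | p fun i => X i ω}
      = ∑ A ∈ {A : Finset ι | p (pmIndicator A)}, ∏ i, P {ω | X i ω = pmIndicator A i} := by
  set W : Finset (Finset ι) := {A | p (pmIndicator A)}
  set E : Finset ι → Set Ω := fun A => ⋂ i, {ω | X i ω = pmIndicator A i}
  have hE : ∀ A ω, ω ∈ E A ↔ (fun i => X i ω) = pmIndicator A := fun A ω => by
    simp [E, funext_iff]
  have hcover : {ω | p fun i => X i ω} =ᵐ[P] ⋃ A ∈ W, E A := by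
    refine Filter.eventuallyEq_set.2 ?_
    filter_upwards [ae_all_iff.2 hpm] with ω hω
    have hA : (fun i => X i ω) = pmIndicator {i | X i ω = 1} := funext fun i => by
      rcases hω i with h | h <;> simp [pmIndicator, h]
    simp [W, hE, hA, pmIndicator_injective.eq_iff]
  rw [measure_congr hcover, measure_biUnion_finset]
  · exact sum_congr rfl fun A _ =>
      hind.meas_iInter fun i => ⟨{pmIndicator A i}, measurableSet_singleton _, rfl⟩
  · intro A _ B _ hAB
    exact Set.disjoint_left.2 fun ω hA hB =>
      hAB (pmIndicator_injective (((hE A ω).1 hA).symm.trans ((hE B ω).1 hB)))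
  · exact fun A _ => MeasurableSet.iInter fun i => hX i (measurableSet_singleton _)

theorem toReal_measure_sign_sum_ne_eq_minorityProb [IsProbabilityMeasure P] {k : ℕ}
    (hι : Fintype.card ι = 2 * k + 1) (hX : ∀ i, Measurable (X i)) (hind : iIndepFun X P)
    {x : ι → ℝ}
    (hX₁ : ∀ i, (P {ω | X i ω = 1}).toReal = 1 / 2 + x i)
    (hXneg : ∀ i, (P {ω | X i ω = -1}).toReal = 1 / 2 - x i) {s : ℝ} (hs : s ≠ 0) :
    (P {ω | Real.sign (∑ i, X i ω) ≠ Real.sign s}).toReal = minorityProb k (Real.sign s • x) := by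
  have hpm : ∀ i, ∀ᵐ ω ∂P, X i ω = 1 ∨ X i ω = -1 := fun i =>
    ae_eq_one_or_eq_neg_one (hX i) (by rw [hX₁, hXneg]; ring)
  have hprob : ∀ A i, (P {ω | X i ω = pmIndicator A i}).toReal = 1 / 2 + pmIndicator A i * x i :=
    fun A i => by unfold pmIndicator; split_ifs <;> simp [hX₁, hXneg, sub_eq_add_neg]
  have hsum : (P {ω | Real.sign (∑ i, X i ω) ≠ Real.sign s}).toReal
      = ∑ A ∈ {A : Finset ι | Real.sign (∑ i, pmIndicator A i) ≠ Real.sign s},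
          ∏ i, (1 / 2 + pmIndicator A i * x i) := by
    rw [measure_setOf_eq_sum_prod hX hind hpm (fun v => Real.sign (∑ i, v i) ≠ Real.sign s),
      ENNReal.toReal_sum fun _ _ => ENNReal.prod_ne_top fun _ _ => measure_ne_top _ _]
    simp only [ENNReal.toReal_prod, hprob]
  rw [hsum]
  rcases hs.lt_or_gt with hneg | hpos
  · rw [Real.sign_of_neg hneg, neg_one_smul, ← sum_filter_not_card_le_eq_minorityProb_neg hι]
    refine sum_congr (filter_congr fun A _ => ?_) fun _ _ => rfl
    rw [sign_sum_pmIndicator hι]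
    split_ifs <;> norm_num [*]
  · rw [Real.sign_of_pos hpos, one_smul, minorityProb]
    refine sum_congr (filter_congr fun A _ => ?_) fun _ _ => rfl
    rw [sign_sum_pmIndicator hι]
    split_ifs <;> norm_num [*]

end Probability

theorem stmt_2 {Ω : Type*} [MeasurableSpace Ω] (P : Measure Ω) [IsProbabilityMeasure P]
    (M : ℕ) (hModd : Odd M)
    (u : Fin M → ℝ) (S : ℝ) (hS : S = ∑ m, u m) (hS0 : S ≠ 0)
    (uhat : ℝ → Fin M → Ω → ℝ)
    (hmeas : ∀ b m, Measurable (uhat b m))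
    (hindep : ∀ b : ℝ, 0 < b → (∀ m, |u m| ≤ b) →
      iIndepFun (uhat b) P)
    (h1 : ∀ b : ℝ, 0 < b → (∀ m, |u m| ≤ b) → ∀ m,
      (P {ω | uhat b m ω = 1}).toReal = (b + u m) / (2 * b))
    (hneg1 : ∀ b : ℝ, 0 < b → (∀ m, |u m| ≤ b) → ∀ m,
      (P {ω | uhat b m ω = -1}).toReal = (b - u m) / (2 * b)) :
    ∃ C > (0 : ℝ), ∃ b₀ : ℝ, (0 < b₀ ∧ ∀ m, |u m| ≤ b₀) ∧ ∀ b ≥ b₀,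
      |(P {ω | Real.sign (∑ m, uhat b m ω) ≠ Real.sign S}).toReal -
          (1 / 2 - ((M - 1).choose ((M - 1) / 2) : ℝ) / (2 ^ M * b) * |S|)| ≤ C / b ^ 2 := by
  obtain ⟨k, rfl⟩ := hModd
  set U := ∑ m, |u m|
  have hU : ∀ m, |u m| ≤ U := fun m => single_le_sum (fun i _ => abs_nonneg (u i)) (mem_univ m)
  have hU₀ : 0 ≤ U := sum_nonneg fun i _ => abs_nonneg (u i)
  refine ⟨16 ^ k * U ^ 2 + 1, by positivity, U + 1, ⟨by positivity, fun m => by linarith [hU m]⟩,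
    fun b hb => ?_⟩
  have hb₀ : 0 < b := by linarith
  have hub : ∀ m, |u m| ≤ b := fun m => by linarith [hU m]
  have hP := toReal_measure_sign_sum_ne_eq_minorityProb (Fintype.card_fin _) (hmeas b)
    (hindep b hb₀ hub) (x := fun m => u m / (2 * b)) (fun m => by rw [h1 b hb₀ hub]; field_simp)
    (fun m => by rw [hneg1 b hb₀ hub]; field_simp) hS0
  set y : Fin (2 * k + 1) → ℝ := Real.sign S • fun m => u m / (2 * b)
  have hy : ∀ m, |y m| ≤ U / (2 * b) := fun m => by
    simpa [y, abs_mul, Real.abs_sign_of_ne_zero hS0, abs_div, abs_of_pos hb₀]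
      using div_le_div_of_nonneg_right (hU m) (by positivity : (0 : ℝ) ≤ 2 * b)
  have hsum : ∑ m, y m = |S| / (2 * b) := by
    simp only [y, Pi.smul_apply, smul_eq_mul, ← mul_sum, ← sum_div, ← hS, ← mul_div_assoc,
      Real.sign_mul_self_eq_abs]
  have key := abs_minorityProb_sub_le (Fintype.card_fin _) hy
    (by rw [div_le_one (by positivity)]; linarith)
  rw [hP, show 2 * k + 1 - 1 = 2 * k by omega, Nat.mul_div_cancel_left k two_pos]
  calc _ = |minorityProb k y - (1 / 2 - (2 * k).choose k * (1 / 2) ^ (2 * k) * ∑ i, y i)| := by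
        rw [hsum, one_div_pow, pow_succ]; congr 2; field_simp
    _ ≤ 2 * 16 ^ k * (U / (2 * b)) ^ 2 := key
    _ ≤ (16 ^ k * U ^ 2 + 1) / b ^ 2 := by
        rw [div_pow, le_div_iff₀ (by positivity)]
        field_simp
        nlinarith [pow_pos (by norm_num : (0 : ℝ) < 16) k]
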